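/- arXiv:1804.09469 — 2 statements merged into one kernel-verified Lean document; each statement's English description precedes it below -/
import Mathlib

section
/- Let i ∈ {1,…,s}, let J be a minimal Q_i-divisor of I with image J̄ in R, and define the affine Hilbert function of J̄ by HF^a_{J̄}(j) = dim_K(J̄ ∩ F_jR) for j ∈ ℤ. Then ri(J̄) := max{ord_F(f) : f ∈ J̄ \ {0}} equals min{j ∈ ℤ : HF^a_{J̄}(j) = ℓ_i}, and HF^a_{J̄}(j) = ℓ_i for all j ≥ ri(J̄). -/
open MvPolynomial

set_option synthInstance.maxHeartbeats 1000000
set_option maxHeartbeats 1000000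

namespace CB

variable (K : Type*) [Field K] {n : ℕ}

/-- The degree filtration `F_iR` on `R = P/I`: the image in `R` of the polynomials
of total degree at most `i` (together with `0`), and `{0}` for `i < 0`. -/
noncomputable def degFil (I : Ideal (MvPolynomial (Fin n) K)) (i : ℤ) :
    Submodule K (MvPolynomial (Fin n) K ⧸ I) :=
  if 0 ≤ i then
    Submodule.map (Ideal.Quotient.mkₐ K I).toLinearMap
      (restrictTotalDegree (Fin n) K i.toNat)
  else ⊥

/-- The affine Hilbert function `HF^a_R(i) = dim_K F_iR`. -/
noncomputable def aHF (I : Ideal (MvPolynomial (Fin n) K)) (i : ℤ) : ℕ :=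
  Module.finrank K (degFil K I i)

/-- The regularity index `ri(R)`: the smallest `i` with `HF^a_R(i) = dim_K R`. -/
noncomputable def ri (I : Ideal (MvPolynomial (Fin n) K)) : ℤ :=
  sInf {i : ℤ | aHF K I i = Module.finrank K (MvPolynomial (Fin n) K ⧸ I)}

/-- The order `ord_F(f)` of an element of `R`. -/
noncomputable def ordF (I : Ideal (MvPolynomial (Fin n) K))
    (f : MvPolynomial (Fin n) K ⧸ I) : ℤ :=
  sInf {i : ℤ | f ∈ degFil K I i}

/-- The action of `R` on the canonical module `ω_R = Hom_K(R,K)`: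
`(f · φ)(g) = φ(f * g)`. -/
noncomputable def dAct (I : Ideal (MvPolynomial (Fin n) K))
    (f : MvPolynomial (Fin n) K ⧸ I)
    (φ : Module.Dual K (MvPolynomial (Fin n) K ⧸ I)) :
    Module.Dual K (MvPolynomial (Fin n) K ⧸ I) :=
  φ.comp (LinearMap.mulLeft K f)

/-- The degree filtration `G_iω_R = {φ : φ(F_{-i-1}R) = 0}` on the canonical module. -/
noncomputable def Gfil (I : Ideal (MvPolynomial (Fin n) K)) (i : ℤ) :
    Submodule K (Module.Dual K (MvPolynomial (Fin n) K ⧸ I)) :=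
  Submodule.dualAnnihilator (degFil K I (-i - 1))

/-- The order `ord_G(φ)` of an element of `ω_R`. -/
noncomputable def ordG (I : Ideal (MvPolynomial (Fin n) K))
    (φ : Module.Dual K (MvPolynomial (Fin n) K ⧸ I)) : ℤ :=
  sInf {i : ℤ | φ ∈ Gfil K I i}

/-- `Q : Fin s → Ideal P` is the (minimal) primary decomposition of `I`. -/
def IsPrimaryDecomp (I : Ideal (MvPolynomial (Fin n) K)) {s : ℕ}
    (Q : Fin s → Ideal (MvPolynomial (Fin n) K)) : Prop :=
  (∀ i, (Q i).IsPrimary) ∧ I = ⨅ i, Q i ∧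
    Function.Injective fun i => (Q i).radical

/-- The image `q_j` of the primary component `Q_j` in `R`. -/
noncomputable def qR (I : Ideal (MvPolynomial (Fin n) K)) {s : ℕ}
    (Q : Fin s → Ideal (MvPolynomial (Fin n) K)) (j : Fin s) :
    Ideal (MvPolynomial (Fin n) K ⧸ I) :=
  (Q j).map (Ideal.Quotient.mk I)

/-- The image `m_j` of the maximal component `M_j = Rad(Q_j)` in `R`. -/
noncomputable def mR (I : Ideal (MvPolynomial (Fin n) K)) {s : ℕ}
    (Q : Fin s → Ideal (MvPolynomial (Fin n) K)) (j : Fin s) :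
    Ideal (MvPolynomial (Fin n) K ⧸ I) :=
  ((Q j).radical).map (Ideal.Quotient.mk I)

/-- `ℓ_i = dim_K (P / M_i)`. -/
noncomputable def ell {s : ℕ} (Q : Fin s → Ideal (MvPolynomial (Fin n) K)) (i : Fin s) : ℕ :=
  Module.finrank K (MvPolynomial (Fin n) K ⧸ (Q i).radical)

/-- `f ∈ R` is a separator for `m_i`: `dim_K⟨f⟩ = dim_K(R/m_i)` and `f ∈ q_j` for `j ≠ i`. -/
def IsSeparator (I : Ideal (MvPolynomial (Fin n) K)) {s : ℕ}
    (Q : Fin s → Ideal (MvPolynomial (Fin n) K)) (i : Fin s)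
    (f : MvPolynomial (Fin n) K ⧸ I) : Prop :=
  Module.finrank K ((Ideal.span {f}).restrictScalars K)
      = Module.finrank K ((MvPolynomial (Fin n) K ⧸ I) ⧸ mR K I Q i) ∧
    ∀ j, j ≠ i → f ∈ qR K I Q j

/-- `J` is a `Q_i`-divisor of `I`. -/
def IsQiDivisor (I : Ideal (MvPolynomial (Fin n) K)) {s : ℕ}
    (Q : Fin s → Ideal (MvPolynomial (Fin n) K)) (i : Fin s)
    (J : Ideal (MvPolynomial (Fin n) K)) : Prop :=
  ∃ Q' : Ideal (MvPolynomial (Fin n) K),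
    Q i < Q' ∧ Q' ≤ (Q i).radical ∧ J = ⨅ j, if j = i then Q' else Q j

/-- The image `J̄` of an ideal `J ⊇ I` in `R`, as a `K`-vector subspace; its dimension
is `dim_K (J/I)`. -/
noncomputable def resIm (I J : Ideal (MvPolynomial (Fin n) K)) :
    Submodule K (MvPolynomial (Fin n) K ⧸ I) :=
  (J.map (Ideal.Quotient.mk I)).restrictScalars K

/-- `J` is a minimal `Q_i`-divisor of `I`: a `Q_i`-divisor with `dim_K(J/I) = ℓ_i`. -/
def IsMinQiDivisor (I : Ideal (MvPolynomial (Fin n) K)) {s : ℕ}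
    (Q : Fin s → Ideal (MvPolynomial (Fin n) K)) (i : Fin s)
    (J : Ideal (MvPolynomial (Fin n) K)) : Prop :=
  IsQiDivisor K I Q i J ∧ Module.finrank K (resIm K I J) = ell K Q i

/-- `ri(J̄) = max { ord_F(f) : f ∈ J̄ \ {0} }`. -/
noncomputable def riBar (I J : Ideal (MvPolynomial (Fin n) K)) : ℤ :=
  sSup {d : ℤ | ∃ f ∈ resIm K I J, f ≠ 0 ∧ ordF K I f = d}

/-- The separator degree `sepdeg(m_i) = min { ri(J̄) : J a minimal Q_i-divisor of I }`. -/
noncomputable def sepdeg (I : Ideal (MvPolynomial (Fin n) K)) {s : ℕ}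
    (Q : Fin s → Ideal (MvPolynomial (Fin n) K)) (i : Fin s) : ℤ :=
  sInf {d : ℤ | ∃ J, IsMinQiDivisor K I Q i J ∧ riBar K I J = d}

/-- `R = P/I` has the Cayley–Bacharach property: `sepdeg(m_i) = ri(R)` for all maximal
ideals `m_i`, where the `m_i` come from the primary decomposition of `I`. -/
def hasCBP (I : Ideal (MvPolynomial (Fin n) K)) : Prop :=
  ∀ (s : ℕ) (Q : Fin s → Ideal (MvPolynomial (Fin n) K)),
    IsPrimaryDecomp K I Q → ∀ i, sepdeg K I Q i = ri K I

/-- The socle of a ring `A` with respect to an ideal `m`: `Ann_A(m)`. -/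
noncomputable def socle (A : Type*) [CommRing A] (m : Ideal A) : Ideal A :=
  Submodule.colon ⊥ (m : Set A)

theorem socle_isTorsionBySet (A : Type*) [CommRing A] (m : Ideal A) :
    Module.IsTorsionBySet A (socle A m) m := by
  intro x a
  have h : (x : A) • (a : A) ∈ (⊥ : Ideal A) :=
    Submodule.mem_colon.mp x.2 (a : A) a.2
  apply Subtype.ext
  have : (a : A) * (x : A) = 0 := by
    simpa [smul_eq_mul, mul_comm] using h
  simpa [smul_eq_mul] using this

/-- The socle, viewed as a vector space over the residue field `A/m`. -/
noncomputable def socleModule (A : Type*) [CommRing A] (m : Ideal A) :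
    Module (A ⧸ m) (socle A m) :=
  (socle_isTorsionBySet A m).module

/-- The socle of `A` at `m` is one-dimensional over the residue field `A/m`. -/
def SocleOneDim (A : Type*) [CommRing A] (m : Ideal A) : Prop :=
  @Module.finrank (A ⧸ m) (socle A m) _ _ (socleModule A m) = 1

/-- `R = P/I` is locally Gorenstein: every local factor `R/q_i` is a Gorenstein local
ring, i.e. its socle is one-dimensional over the residue field. -/
def IsLocallyGorenstein (I : Ideal (MvPolynomial (Fin n) K)) : Prop :=
  ∀ (s : ℕ) (Q : Fin s → Ideal (MvPolynomial (Fin n) K)), IsPrimaryDecomp K I Q →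
    ∀ i, SocleOneDim ((MvPolynomial (Fin n) K ⧸ I) ⧸ qR K I Q i)
      ((mR K I Q i).map (Ideal.Quotient.mk (qR K I Q i)))

/-- The degree form ideal `DF(I)`, generated by the degree forms (top degree homogeneous
components) of the nonzero elements of `I`; one has `gr_F(R) ≅ P/DF(I)`. -/
noncomputable def DF (I : Ideal (MvPolynomial (Fin n) K)) :
    Ideal (MvPolynomial (Fin n) K) :=
  Ideal.span {g | ∃ f ∈ I, f ≠ (0 : MvPolynomial (Fin n) K) ∧
    g = homogeneousComponent f.totalDegree f}

/-- The maximal ideal of the graded local ring `gr_F(R) ≅ P/DF(I)`: the image of the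
irrelevant ideal `⟨x_1,…,x_n⟩`. -/
noncomputable def grMaxIdeal (I : Ideal (MvPolynomial (Fin n) K)) :
    Ideal (MvPolynomial (Fin n) K ⧸ DF K I) :=
  (Ideal.span (Set.range (X : Fin n → MvPolynomial (Fin n) K))).map
    (Ideal.Quotient.mk (DF K I))

/-- `R` is a strict Gorenstein ring: the socle of `gr_F(R) ≅ P/DF(I)` is one-dimensional
over `K`. -/
def IsStrictGorenstein (I : Ideal (MvPolynomial (Fin n) K)) : Prop :=
  Module.finrank K
    ((socle (MvPolynomial (Fin n) K ⧸ DF K I) (grMaxIdeal K I)).restrictScalars K) = 1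

/-- The extension ideal `I·L[x_1,…,x_n]`, so that `R ⊗_K L = L[x_1,…,x_n]/I·L[x_1,…,x_n]`. -/
noncomputable def extIdeal (L : Type*) [Field L] [Algebra K L]
    (I : Ideal (MvPolynomial (Fin n) K)) : Ideal (MvPolynomial (Fin n) L) :=
  I.map (MvPolynomial.map (algebraMap K L))

/-- The affine Hilbert function of `R` is symmetric:
`ΔHF^a_R(ri(R)−i) = ΔHF^a_R(i)` for all `i ∈ ℤ`. -/
def SymmetricHF (I : Ideal (MvPolynomial (Fin n) K)) : Prop :=
  ∀ i : ℤ, (aHF K I (ri K I - i) : ℤ) - aHF K I (ri K I - i - 1)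
    = (aHF K I i : ℤ) - aHF K I (i - 1)

/-- `Ann_R(φ) = {0}` for `φ ∈ ω_R`. -/
def AnnZero (I : Ideal (MvPolynomial (Fin n) K))
    (φ : Module.Dual K (MvPolynomial (Fin n) K ⧸ I)) : Prop :=
  ∀ f : MvPolynomial (Fin n) K ⧸ I, dAct K I f φ = 0 → f = 0

/-- `φ` generates `ω_R` as an `R`-module: `ω_R = ⟨φ⟩`. -/
def GeneratesDual (I : Ideal (MvPolynomial (Fin n) K))
    (φ : Module.Dual K (MvPolynomial (Fin n) K ⧸ I)) : Prop :=
  ∀ ψ : Module.Dual K (MvPolynomial (Fin n) K ⧸ I),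
    ∃ f : MvPolynomial (Fin n) K ⧸ I, ψ = dAct K I f φ

/-- The `i`-th socle space `S_i ⊆ R`: the preimage under the decomposition
`R ≅ R/q_1 × … × R/q_s` of `{0} × … × Soc(R/q_i) × … × {0}`. -/
noncomputable def socSpace (I : Ideal (MvPolynomial (Fin n) K)) {s : ℕ}
    (Q : Fin s → Ideal (MvPolynomial (Fin n) K)) (i : Fin s) :
    Ideal (MvPolynomial (Fin n) K ⧸ I) :=
  ((socle ((MvPolynomial (Fin n) K ⧸ I) ⧸ qR K I Q i)
        ((mR K I Q i).map (Ideal.Quotient.mk (qR K I Q i)))).comap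
      (Ideal.Quotient.mk (qR K I Q i))) ⊓
    ⨅ j ≠ i, qR K I Q j

end CB

universe u

namespace CB

variable {K : Type u} [Field K] {n : ℕ}

/-!
A subspace `S ⊆ R` lies in `F_jR` exactly when every nonzero `f ∈ S` has `ord_F(f) ≤ j`,
i.e. when `ri(S) ≤ j`; and since `S` is finite dimensional, `S ⊆ F_jR` exactly when
`dim_K (S ∩ F_jR) = dim_K S`. For `S = J̄` with `dim_K J̄ = ℓ_i > 0`, the set of `j` with
`HF^a_{J̄}(j) = ℓ_i` is therefore the ray `[ri(J̄), ∞)`.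
-/

section DegreeFiltration

variable (I : Ideal (MvPolynomial (Fin n) K))

lemma degFil_mono : Monotone (degFil K I) := by
  intro a b hab
  unfold degFil
  by_cases ha : 0 ≤ a
  · rw [if_pos ha, if_pos (ha.trans hab)]
    refine Submodule.map_mono fun p hp => ?_
    rw [mem_restrictTotalDegree] at hp ⊢
    omega
  · rw [if_neg ha]
    exact bot_le

lemma degFil_of_neg {i : ℤ} (hi : i < 0) : degFil K I i = ⊥ :=
  if_neg (not_le.mpr hi)

lemma exists_mem_degFil (x : MvPolynomial (Fin n) K ⧸ I) :
    ∃ N : ℕ, x ∈ degFil K I N := by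
  obtain ⟨p, rfl⟩ := Ideal.Quotient.mk_surjective x
  refine ⟨p.totalDegree, ?_⟩
  rw [degFil, if_pos (by positivity)]
  exact ⟨p, (mem_restrictTotalDegree _ _ _).mpr (by simp), rfl⟩

lemma exists_degFil_eq_top [FiniteDimensional K (MvPolynomial (Fin n) K ⧸ I)] :
    ∃ N : ℤ, degFil K I N = ⊤ := by
  choose deg hdeg using exists_mem_degFil I
  obtain ⟨T, hT⟩ := Module.finite_def.mp
    (inferInstance : Module.Finite K (MvPolynomial (Fin n) K ⧸ I))
  refine ⟨(T.sup deg : ℕ), eq_top_iff.mpr ?_⟩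
  rw [← hT, Submodule.span_le]
  exact fun t ht => degFil_mono I (Nat.cast_le.mpr (Finset.le_sup ht)) (hdeg t)

variable {I}

lemma ordF_le_iff {f : MvPolynomial (Fin n) K ⧸ I} (hf : f ≠ 0) (j : ℤ) :
    ordF K I f ≤ j ↔ f ∈ degFil K I j := by
  have hbdd : BddBelow {i : ℤ | f ∈ degFil K I i} := by
    refine ⟨0, fun i hi => ?_⟩
    by_contra! hneg
    exact hf (by simpa [degFil_of_neg I hneg] using hi)
  obtain ⟨N, hN⟩ := exists_mem_degFil I f
  have hmem : f ∈ degFil K I (ordF K I f) := Int.csInf_mem ⟨N, hN⟩ hbdd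
  exact ⟨fun h => degFil_mono I h hmem, fun h => csInf_le hbdd h⟩

lemma le_degFil_iff_sSup_ordF_le [FiniteDimensional K (MvPolynomial (Fin n) K ⧸ I)]
    {S : Submodule K (MvPolynomial (Fin n) K ⧸ I)} (hS : S ≠ ⊥) (j : ℤ) :
    S ≤ degFil K I j ↔ sSup {d : ℤ | ∃ f ∈ S, f ≠ 0 ∧ ordF K I f = d} ≤ j := by
  obtain ⟨f, hfS, hf⟩ := Submodule.exists_mem_ne_zero_of_ne_bot hS
  have hne : {d : ℤ | ∃ f ∈ S, f ≠ 0 ∧ ordF K I f = d}.Nonempty := ⟨_, f, hfS, hf, rfl⟩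
  obtain ⟨N, hN⟩ := exists_degFil_eq_top I
  have hbdd : BddAbove {d : ℤ | ∃ f ∈ S, f ≠ 0 ∧ ordF K I f = d} := by
    refine ⟨N, ?_⟩
    rintro _ ⟨g, -, hg, rfl⟩
    exact (ordF_le_iff hg N).mpr (hN ▸ Submodule.mem_top)
  constructor
  · intro hle
    refine csSup_le hne ?_
    rintro _ ⟨g, hgS, hg, rfl⟩
    exact (ordF_le_iff hg j).mpr (hle hgS)
  · intro hle g hgS
    by_cases hg : g = 0
    · exact hg ▸ Submodule.zero_mem _
    · exact (ordF_le_iff hg j).mp ((le_csSup hbdd ⟨g, hgS, hg, rfl⟩).trans hle)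

end DegreeFiltration

lemma finrank_inf_eq_finrank_iff {V : Type*} [AddCommGroup V] [Module K V]
    (S T : Submodule K V) [FiniteDimensional K S] :
    Module.finrank K ↥(S ⊓ T) = Module.finrank K S ↔ S ≤ T :=
  ⟨fun h => inf_eq_left.mp (Submodule.eq_of_le_of_finrank_eq inf_le_left h),
    fun h => by rw [inf_eq_left.mpr h]⟩

lemma ell_pos {s : ℕ} {I : Ideal (MvPolynomial (Fin n) K)}
    [FiniteDimensional K (MvPolynomial (Fin n) K ⧸ I)]
    {Q : Fin s → Ideal (MvPolynomial (Fin n) K)} (hQ : IsPrimaryDecomp K I Q) (i : Fin s) :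
    0 < ell K Q i := by
  have hI : I ≤ (Q i).radical := hQ.2.1 ▸ (iInf_le Q i).trans (Q i).le_radical
  have : Nontrivial (MvPolynomial (Fin n) K ⧸ (Q i).radical) :=
    Ideal.Quotient.nontrivial_iff.mpr fun h => (hQ.1 i).1 (Ideal.radical_eq_top.mp h)
  have : FiniteDimensional K (MvPolynomial (Fin n) K ⧸ (Q i).radical) :=
    Module.Finite.of_surjective (Ideal.Quotient.factorₐ K hI).toLinearMap
      (Ideal.Quotient.factor_surjective hI)
  exact Module.finrank_pos

theorem stmt_3 {s : ℕ} (I : Ideal (MvPolynomial (Fin n) K))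
    [FiniteDimensional K (MvPolynomial (Fin n) K ⧸ I)]
    (Q : Fin s → Ideal (MvPolynomial (Fin n) K)) (hQ : IsPrimaryDecomp K I Q)
    (i : Fin s) (J : Ideal (MvPolynomial (Fin n) K))
    (hJ : IsMinQiDivisor K I Q i J) :
    riBar K I J =
      sInf {j : ℤ | Module.finrank K ↥(resIm K I J ⊓ degFil K I j) = ell K Q i} ∧
    ∀ j : ℤ, riBar K I J ≤ j →
      Module.finrank K ↥(resIm K I J ⊓ degFil K I j) = ell K Q i := by
  have hne : resIm K I J ≠ ⊥ := fun h =>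
    (ell_pos hQ i).ne' (by rw [← hJ.2, h, finrank_bot])
  have key : {j : ℤ | Module.finrank K ↥(resIm K I J ⊓ degFil K I j) = ell K Q i}
      = Set.Ici (riBar K I J) := by
    ext j
    rw [Set.mem_ofPred_eq, ← hJ.2, finrank_inf_eq_finrank_iff,
      le_degFil_iff_sSup_ordF_le hne]
    rfl
  rw [key, csInf_Ici]
  exact ⟨rfl, fun j hj => key.ge hj⟩

end CB
end

section
/- If there exists an element φ ∈ G_{−ri(R)}ω_R with Ann_R(φ) = {0}, then HF^a_R(i) + HF^a_R(ri(R)−1−i) ≤ dim_K(R) for i = 0,…,ri(R)−1. -/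
open MvPolynomial

set_option synthInstance.maxHeartbeats 1000000
set_option maxHeartbeats 1000000

universe u

/-! Since `Ann_R(φ) = 0`, the pairing `(f, g) ↦ φ(f g)` embeds `R` into `ω_R`. The filtration is
multiplicative, so `φ ∈ G_{-ri(R)}ω_R` kills `F_i R · F_{ri(R)-1-i} R ⊆ F_{ri(R)-1} R`; hence
`F_i R` embeds into the annihilator of `F_{ri(R)-1-i} R`, whose dimension is
`dim_K R - HF^a_R(ri(R)-1-i)`. -/

namespace CB

theorem finrank_add_finrank_le_of_injective_of_pairing_eq_zero {K M N : Type*} [Field K]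
    [AddCommGroup M] [Module K M] [AddCommGroup N] [Module K N] [FiniteDimensional K N]
    (B : M →ₗ[K] Module.Dual K N) (hB : Function.Injective B) {U : Submodule K M}
    {V : Submodule K N} (hUV : ∀ u ∈ U, ∀ v ∈ V, B u v = 0) :
    Module.finrank K U + Module.finrank K V ≤ Module.finrank K N := by
  have hB_mem : ∀ u : U, B u ∈ V.dualAnnihilator := fun u =>
    (Submodule.mem_dualAnnihilator _).2 fun v hv => hUV u u.2 v hv
  have hU_le : Module.finrank K U ≤ Module.finrank K V.dualAnnihilator :=
    LinearMap.finrank_le_finrank_of_injective (f := (B.domRestrict U).codRestrict _ hB_mem)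
      fun u u' h => Subtype.ext (hB (congrArg Subtype.val h))
  have := Subspace.finrank_add_finrank_dualAnnihilator_eq V
  omega

variable {K : Type u} [Field K] {n : ℕ}

lemma mul_mem_degFil (I : Ideal (MvPolynomial (Fin n) K)) {a b : ℤ} (ha : 0 ≤ a)
    (hb : 0 ≤ b) {f g : MvPolynomial (Fin n) K ⧸ I} (hf : f ∈ degFil K I a)
    (hg : g ∈ degFil K I b) : f * g ∈ degFil K I (a + b) := by
  simp only [degFil, if_pos ha, if_pos hb, if_pos (add_nonneg ha hb)] at *
  obtain ⟨p, hp, rfl⟩ := hf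
  obtain ⟨q, hq, rfl⟩ := hg
  refine ⟨p * q, ?_, by simp⟩
  rw [SetLike.mem_coe, mem_restrictTotalDegree] at *
  calc (p * q).totalDegree ≤ p.totalDegree + q.totalDegree := totalDegree_mul p q
    _ ≤ a.toNat + b.toNat := add_le_add hp hq
    _ = (a + b).toNat := (Int.toNat_add ha hb).symm

lemma Gfil_neg (I : Ideal (MvPolynomial (Fin n) K)) (r : ℤ) :
    Gfil K I (-r) = (degFil K I (r - 1)).dualAnnihilator := by
  rw [Gfil, neg_neg]

lemma AnnZero.injective_mul_compr₂ {I : Ideal (MvPolynomial (Fin n) K)}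
    {φ : Module.Dual K (MvPolynomial (Fin n) K ⧸ I)} (hφ : AnnZero K I φ) :
    Function.Injective ((LinearMap.mul K _).compr₂ φ) :=
  (injective_iff_map_eq_zero _).2 fun f hf => hφ f hf

theorem stmt_13 (I : Ideal (MvPolynomial (Fin n) K))
    [FiniteDimensional K (MvPolynomial (Fin n) K ⧸ I)]
    (h : ∃ φ ∈ Gfil K I (-(ri K I)), AnnZero K I φ) :
    ∀ i : ℤ, 0 ≤ i → i ≤ ri K I - 1 →
      (aHF K I i : ℤ) + aHF K I (ri K I - 1 - i)
        ≤ (Module.finrank K (MvPolynomial (Fin n) K ⧸ I) : ℤ) := by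
  obtain ⟨φ, hφG, hφAnn⟩ := h
  intro i hi0 hir
  rw [Gfil_neg] at hφG
  have hφ_kills : ∀ f ∈ degFil K I i, ∀ g ∈ degFil K I (ri K I - 1 - i), φ (f * g) = 0 :=
    fun f hf g hg => (Submodule.mem_dualAnnihilator φ).1 hφG _ <| by
      simpa using mul_mem_degFil I hi0 (by omega) hf hg
  exact_mod_cast finrank_add_finrank_le_of_injective_of_pairing_eq_zero _
    hφAnn.injective_mul_compr₂ hφ_kills

end CB
end
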